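/- Let V be a vertex superalgebra and γ a formal variable. Define Õ_γ(V) := Span_{ℂ[γ]}{ a ∘_{γ,2} b : a, b ∈ V } ⊂ V[γ]. Then Õ_γ(V) contains all elements a ∘_{γ,n} b for every n ≥ 2 and a, b ∈ V; in fact Õ_γ(V) = ∑_{n≥2} Span_{ℂ[γ]}{ a ∘_{γ,n} b : a, b ∈ V }. -/

import Mathlib

/-!
Framework: vertex superalgebras over ℂ, Huang's operations `∘_{γ,n}`,
and the associated Zhu-type subspaces and quotients.
-/

noncomputable section

open scoped BigOperators

/-- A vertex superalgebra over `ℂ`: a `ℤ/2`-graded complex vector space `V`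
(with grading given by a pair of complementary submodules `even`, `odd`),
a state-field correspondence `Y` (recorded through its modes `a_(n) = Y a n`),
a vacuum vector, and an even translation operator `T = ∂`, subject to the
field condition, the vacuum axiom, the translation axiom and locality. -/
structure VertexSuperalgebra (V : Type) [AddCommGroup V] [Module ℂ V] where
  even : Submodule ℂ V
  odd : Submodule ℂ V
  grading_sup : even ⊔ odd = ⊤
  grading_inf : even ⊓ odd = ⊥
  /-- the modes of the state-field correspondence: `Y a n = a_(n)` -/
  Y : V →ₗ[ℂ] ℤ → Module.End ℂ V
  vacuum : V
  vacuum_even : vacuum ∈ even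
  /-- the (even) translation operator `∂` -/
  T : Module.End ℂ V
  /-- field condition: `a_(n) b = 0` for `n ≫ 0` -/
  field_cond : ∀ a b : V, ∃ N : ℤ, ∀ n : ℤ, N < n → Y a n b = 0
  /-- `Y(|0⟩, z) = id` -/
  vacuum_field : ∀ n : ℤ, Y vacuum n = if n = -1 then LinearMap.id else 0
  /-- `Y(a,z)|0⟩ = a + O(z)` -/
  creation_eq : ∀ a : V, Y a (-1) vacuum = a
  creation_zero : ∀ (a : V) (n : ℤ), 0 ≤ n → Y a n vacuum = 0
  T_vacuum : T vacuum = 0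
  /-- translation axiom `[∂, Y(a,z)] = ∂_z Y(a,z)`, in modes -/
  translation : ∀ (a : V) (n : ℤ),
    T ∘ₗ Y a n - Y a n ∘ₗ T = (((-n : ℤ) : ℂ)) • Y a (n - 1)
  /-- locality `(z-w)^M [Y(a,z), Y(b,w)] = 0`, in modes, for parity homogeneous
  `a`, `b` (the Boolean `pa` records the parity of `a`) -/
  locality : ∀ (a b : V) (pa pb : Bool),
    a ∈ (if pa then odd else even) → b ∈ (if pb then odd else even) →
    ∃ M : ℕ, ∀ m n : ℤ,
      ∑ k ∈ Finset.range (M + 1),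
        ((-1 : ℂ) ^ k * (M.choose k : ℂ)) •
          (Y a (m + M - k) ∘ₗ Y b (n + k)
            - (if pa && pb then (-1 : ℂ) else 1) • (Y b (n + M - k) ∘ₗ Y a (m + k))) = 0

namespace VertexSuperalgebra

variable {V : Type} [AddCommGroup V] [Module ℂ V]

/-- the submodule of elements of parity `p` (`false` = even, `true` = odd) -/
def part (𝒱 : VertexSuperalgebra V) (p : Bool) : Submodule ℂ V :=
  if p then 𝒱.odd else 𝒱.even

/-- the Koszul sign `(-1)^{|a||b|}` -/
def ksign (pa pb : Bool) : ℂ := if pa && pb then -1 else 1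

end VertexSuperalgebra

/-- `c(j,n)`: the coefficient of `γ^j z^{-n+j}` in the expansion of the kernel
`γ^n e^{γ z} (e^{γ z} - 1)^{-n}`; equivalently, the `j`-th coefficient of the
power series `e^t ((e^t - 1)/t)^{-n}`. -/
def zhuKernelCoeff (n j : ℕ) : ℂ :=
  PowerSeries.coeff j
    (PowerSeries.exp ℂ *
      ((PowerSeries.mk fun k => (((k + 1).factorial : ℂ))⁻¹)⁻¹) ^ n)

namespace VertexSuperalgebra

variable {V : Type} [AddCommGroup V] [Module ℂ V]

/-- Huang's operation `a ∘_{γ,n} b = Res_z [γ^n e^{γz} (e^{γz}-1)^{-n} Y(a,z) b] dz`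
for a complex number `γ` (for `γ = 0` this is `a_{(-n)} b`).
The residue is computed via the expansion
`a ∘_{γ,n} b = ∑_{j ≥ 0} c(j,n) γ^j a_{(j-n)} b` (a finite sum). -/
def circ (𝒱 : VertexSuperalgebra V) (γ : ℂ) (n : ℕ) (a b : V) : V :=
  ∑ᶠ j : ℕ, (zhuKernelCoeff n j * γ ^ j) • 𝒱.Y a ((j : ℤ) - (n : ℤ)) b

/-- Huang's operation `a ∘_{γ,n} b ∈ V[γ]` for a formal variable `γ`, with values in
the polynomial module `V[γ] = PolynomialModule ℂ V`. -/
def circP (𝒱 : VertexSuperalgebra V) (n : ℕ) (a b : V) : PolynomialModule ℂ V :=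
  ∑ᶠ j : ℕ, PolynomialModule.single ℂ j (zhuKernelCoeff n j • 𝒱.Y a ((j : ℤ) - (n : ℤ)) b)

/-- the λ-bracket `[a_λ b] = ∑_{n ≥ 0} (λ^n / n!) a_(n) b ∈ V[λ]` -/
def lamBr (𝒱 : VertexSuperalgebra V) (a b : V) : PolynomialModule ℂ V :=
  ∑ᶠ n : ℕ, PolynomialModule.single ℂ n (((n.factorial : ℂ))⁻¹ • 𝒱.Y a (n : ℤ) b)

/-- `Õ_γ(V) = Span_{ℂ[γ]}{ a ∘_{γ,2} b } ⊆ V[γ]` for a formal variable `γ` -/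
def OtildeP (𝒱 : VertexSuperalgebra V) : Submodule (Polynomial ℂ) (PolynomialModule ℂ V) :=
  Submodule.span (Polynomial ℂ) {x | ∃ a b : V, x = 𝒱.circP 2 a b}

/-- `Õ(V) = Õ_{γ=1}(V) = Span_ℂ{ a ∘_{1,2} b } ⊆ V` -/
def Otilde1 (𝒱 : VertexSuperalgebra V) : Submodule ℂ V :=
  Submodule.span ℂ {x | ∃ a b : V, x = 𝒱.circ 1 2 a b}

/-- the ℂ[γ]-bilinear extension of `∘_{γ,1}` to `V[γ]` -/
def mulP (𝒱 : VertexSuperalgebra V) (u v : PolynomialModule ℂ V) : PolynomialModule ℂ V :=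
  ∑ᶠ i : ℕ, ∑ᶠ j : ℕ,
    ((Polynomial.X : Polynomial ℂ) ^ (i + j)) • 𝒱.circP 1 (u.coeff i) (v.coeff j)

end VertexSuperalgebra



/-! ## Auxiliary lemmas (added for the proof) -/

namespace ZhuAux
open PowerSeries

def hser : PowerSeries ℂ := PowerSeries.mk fun k => (((k + 1).factorial : ℂ))⁻¹
def gser : PowerSeries ℂ := hser⁻¹

lemma constantCoeff_hser : constantCoeff hser = 1 := by
  simp [hser, ← coeff_zero_eq_constantCoeff]

lemma hser_mul_gser : hser * gser = 1 :=
  PowerSeries.mul_inv_cancel _ (by rw [constantCoeff_hser]; norm_num)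

lemma gser_mul_hser : gser * hser = 1 := by
  rw [mul_comm]; exact hser_mul_gser

lemma coeff_E (j : ℕ) : coeff j (exp ℂ) = ((j.factorial : ℂ))⁻¹ := by
  rw [coeff_exp]
  push_cast
  rw [one_div]

lemma X_mul_hser : X * hser = exp ℂ - 1 := by
  ext j
  cases j with
  | zero => simp [coeff_E]
  | succ j =>
      rw [coeff_succ_X_mul]
      simp [hser, coeff_E, coeff_one]

lemma deriv_exp : d⁄dX ℂ (exp ℂ) = exp ℂ := by
  ext j
  rw [coeff_derivative, coeff_E, coeff_E]
  have e2 : ((j+1).factorial : ℂ) = ((j:ℂ)+1) * (j.factorial : ℂ) := by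
    rw [Nat.factorial_succ]; push_cast; ring
  have h1 : ((j:ℂ)+1) ≠ 0 := by exact_mod_cast Nat.succ_ne_zero j
  have hf : (j.factorial : ℂ) ≠ 0 := by exact_mod_cast j.factorial_ne_zero
  rw [e2, mul_inv]
  field_simp

lemma X_mul_dh : X * (d⁄dX ℂ hser) = exp ℂ - hser := by
  ext j
  cases j with
  | zero => simp [coeff_E, hser]
  | succ j =>
      rw [coeff_succ_X_mul, coeff_derivative]
      simp only [hser, coeff_mk, map_sub, coeff_E]
      have e2 : ((j+1+1).factorial : ℂ) = ((j:ℂ)+2) * ((j+1).factorial : ℂ) := by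
        rw [Nat.factorial_succ]; push_cast; ring
      have h1 : ((j+1).factorial : ℂ) ≠ 0 := by exact_mod_cast (j+1).factorial_ne_zero
      have h3 : ((j:ℂ)+2) ≠ 0 := by exact_mod_cast (by omega : (j+2:ℕ) ≠ 0)
      rw [e2, mul_inv]
      field_simp
      ring

lemma deriv_gser : d⁄dX ℂ gser = -(gser * gser * d⁄dX ℂ hser) := by
  have h0 : d⁄dX ℂ (gser * hser) = 0 := by rw [gser_mul_hser]; exact Derivation.map_one_eq_zero _
  rw [Derivation.leibniz] at h0
  have h1 : gser * (d⁄dX ℂ hser) + hser * (d⁄dX ℂ gser) = 0 := by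
    simpa [smul_eq_mul] using h0
  linear_combination gser * h1 - (d⁄dX ℂ gser) * gser_mul_hser

lemma key_series (n : ℕ) (hn : 1 ≤ n) :
    ((n : ℕ) : ℂ⟦X⟧) * (exp ℂ * gser ^ (n+1))
      = ((n : ℕ) : ℂ⟦X⟧) * (exp ℂ * gser ^ n) - X * (d⁄dX ℂ (exp ℂ * gser ^ n))
        + (1 - ((n:ℕ) : ℂ⟦X⟧)) * (X * (exp ℂ * gser ^ n)) := by
  have hgn : gser ^ (n-1) * (gser * gser) = gser ^ (n+1) := by
    rw [show gser * gser = gser ^ 2 by ring, ← pow_add]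
    congr 1
    omega
  have hdgn : d⁄dX ℂ (gser ^ n) = -(((n:ℕ):ℂ⟦X⟧) * (gser ^ (n+1) * d⁄dX ℂ hser)) := by
    calc d⁄dX ℂ (gser ^ n) = n • gser ^ (n-1) • d⁄dX ℂ gser := (d⁄dX ℂ).leibniz_pow gser n
      _ = ((n:ℕ):ℂ⟦X⟧) * (gser ^ (n-1) * d⁄dX ℂ gser) := by
            rw [smul_eq_mul, nsmul_eq_mul]
      _ = ((n:ℕ):ℂ⟦X⟧) * (gser ^ (n-1) * (-(gser * gser * d⁄dX ℂ hser))) := by rw [deriv_gser]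
      _ = -(((n:ℕ):ℂ⟦X⟧) * ((gser ^ (n-1) * (gser * gser)) * d⁄dX ℂ hser)) := by ring
      _ = -(((n:ℕ):ℂ⟦X⟧) * (gser ^ (n+1) * d⁄dX ℂ hser)) := by rw [hgn]
  have hleib : d⁄dX ℂ (exp ℂ * gser ^ n) = exp ℂ * d⁄dX ℂ (gser ^ n) + gser ^ n * exp ℂ := by
    rw [Derivation.leibniz, deriv_exp, smul_eq_mul, smul_eq_mul]
  have hXd : X * d⁄dX ℂ (exp ℂ * gser ^ n)
      = -(((n:ℕ):ℂ⟦X⟧) * (exp ℂ * gser ^ (n+1) * (X * d⁄dX ℂ hser))) + X * (exp ℂ * gser ^ n) := by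
    rw [hleib, hdgn]; ring
  have hEE : exp ℂ * exp ℂ * gser ^ (n+1)
      = exp ℂ * gser ^ (n+1) + X * (exp ℂ * gser ^ n) := by
    have hE1 : (exp ℂ) = 1 + X * hser := by rw [X_mul_hser]; ring
    calc exp ℂ * exp ℂ * gser ^ (n+1) = (1 + X * hser) * exp ℂ * gser ^ (n+1) := by rw [← hE1]
      _ = exp ℂ * gser ^ (n+1) + X * (exp ℂ * (gser ^ n * (gser * hser))) := by ring
      _ = exp ℂ * gser ^ (n+1) + X * (exp ℂ * gser ^ n) := by rw [gser_mul_hser, mul_one]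
  linear_combination hXd - ((n:ℕ):ℂ⟦X⟧) * (exp ℂ * gser ^ (n+1)) * X_mul_dh
    - ((n:ℕ):ℂ⟦X⟧) * hEE + ((n:ℕ):ℂ⟦X⟧) * (exp ℂ * gser ^ n) * gser_mul_hser

lemma zhu_eq (n j : ℕ) : zhuKernelCoeff n j = coeff j (exp ℂ * gser ^ n) := rfl

lemma coeff_nat_mul (n : ℕ) (f : ℂ⟦X⟧) (j : ℕ) :
    coeff j (((n:ℕ):ℂ⟦X⟧) * f) = (n : ℂ) * coeff j f := by
  have : ((n:ℕ):ℂ⟦X⟧) = C ((n:ℕ):ℂ) := by rw [map_natCast]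
  rw [this, coeff_C_mul]

lemma key_coeff_zero (n : ℕ) (hn : 1 ≤ n) :
    (n : ℂ) * zhuKernelCoeff (n+1) 0 = (n : ℂ) * zhuKernelCoeff n 0 := by
  have h := congrArg (coeff 0) (key_series n hn)
  rw [map_add, map_sub, coeff_nat_mul, coeff_nat_mul, coeff_zero_X_mul] at h
  have h2 : coeff 0 ((1 - ((n:ℕ):ℂ⟦X⟧)) * (X * (exp ℂ * gser ^ n))) = 0 := by
    rw [sub_mul, one_mul, map_sub, coeff_zero_X_mul, coeff_nat_mul, coeff_zero_X_mul]
    ring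
  rw [h2] at h
  simpa [zhu_eq] using h

lemma key_coeff_succ (n j : ℕ) (hn : 1 ≤ n) :
    (n : ℂ) * zhuKernelCoeff (n+1) (j+1)
      = ((n : ℂ) - ((j:ℂ)+1)) * zhuKernelCoeff n (j+1) + ((1:ℂ) - (n:ℂ)) * zhuKernelCoeff n j := by
  have h := congrArg (coeff (j+1)) (key_series n hn)
  rw [map_add, map_sub, coeff_nat_mul, coeff_nat_mul, coeff_succ_X_mul, coeff_derivative] at h
  have h2 : coeff (j+1) ((1 - ((n:ℕ):ℂ⟦X⟧)) * (X * (exp ℂ * gser ^ n)))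
      = ((1:ℂ) - (n:ℂ)) * coeff j (exp ℂ * gser ^ n) := by
    rw [sub_mul, one_mul, map_sub, coeff_succ_X_mul, coeff_nat_mul, coeff_succ_X_mul]
    ring
  rw [h2] at h
  rw [zhu_eq, zhu_eq, zhu_eq]
  linear_combination h

end ZhuAux

namespace VertexSuperalgebra

variable {V : Type} [AddCommGroup V] [Module ℂ V] (𝒱 : VertexSuperalgebra V)

/-! ### vacuum expansion lemmas -/

lemma Y_vac_neg (x : V) : ∀ k : ℕ,
    𝒱.Y x (-(k : ℤ) - 1) 𝒱.vacuum = ((k.factorial : ℂ))⁻¹ • (𝒱.T ^ k) x := by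
  intro k
  induction k with
  | zero => simpa using 𝒱.creation_eq x
  | succ k ih =>
      have htr := 𝒱.translation x (-(k : ℤ) - 1)
      have h := congrArg (fun L : Module.End ℂ V => L 𝒱.vacuum) htr
      simp only [LinearMap.sub_apply, LinearMap.comp_apply, LinearMap.smul_apply] at h
      rw [𝒱.T_vacuum, map_zero, sub_zero, ih] at h
      have hcast : ((-(-(k : ℤ) - 1) : ℤ) : ℂ) = (k : ℂ) + 1 := by push_cast; ring
      rw [hcast] at h
      have hne : ((k : ℂ) + 1) ≠ 0 := by exact_mod_cast Nat.succ_ne_zero k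
      have hidx : (-(k : ℤ) - 1) - 1 = -((k + 1 : ℕ) : ℤ) - 1 := by push_cast; ring
      rw [hidx] at h
      have h2 : 𝒱.Y x (-((k + 1 : ℕ) : ℤ) - 1) 𝒱.vacuum
          = ((k : ℂ) + 1)⁻¹ • (𝒱.T (((k.factorial : ℂ))⁻¹ • (𝒱.T ^ k) x)) := by
        rw [h, smul_smul, inv_mul_cancel₀ hne, one_smul]
      rw [h2, map_smul, smul_smul, Nat.factorial_succ]
      congr 1
      · push_cast
        rw [mul_inv]
      · rw [pow_succ']
        rfl

lemma D_vac (a : V) (s : ℤ) :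
    𝒱.Y (𝒱.T a) s 𝒱.vacuum + ((s : ℤ) : ℂ) • 𝒱.Y a (s - 1) 𝒱.vacuum = 0 := by
  rcases le_or_gt 0 s with hs | hs
  · rw [𝒱.creation_zero _ s hs]
    rcases eq_or_lt_of_le hs with hs0 | hs1
    · rw [← hs0]; simp
    · rw [𝒱.creation_zero a (s - 1) (by omega)]
      simp
  · set k : ℕ := (-s - 1).toNat with hk
    have hsk : s = -(k : ℤ) - 1 := by
      have : ((-s - 1).toNat : ℤ) = -s - 1 := Int.toNat_of_nonneg (by omega)
      omega
    have h1 : 𝒱.Y (𝒱.T a) s 𝒱.vacuum = ((k.factorial : ℂ))⁻¹ • (𝒱.T ^ k) (𝒱.T a) := by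
      rw [hsk]; exact 𝒱.Y_vac_neg (𝒱.T a) k
    have hidx : s - 1 = -((k + 1 : ℕ) : ℤ) - 1 := by omega
    have h2 : 𝒱.Y a (s - 1) 𝒱.vacuum = (((k + 1).factorial : ℂ))⁻¹ • (𝒱.T ^ (k + 1)) a := by
      rw [hidx]; exact 𝒱.Y_vac_neg a (k + 1)
    have h3 : (𝒱.T ^ k) (𝒱.T a) = (𝒱.T ^ (k + 1)) a := by
      rw [pow_succ, Module.End.mul_apply]
    rw [h1, h2, h3, smul_smul, ← add_smul]
    have hcoef : ((k.factorial : ℂ))⁻¹ + ((s : ℤ) : ℂ) * (((k + 1).factorial : ℂ))⁻¹ = 0 := by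
      have hsc : ((s : ℤ) : ℂ) = -((k : ℂ) + 1) := by rw [hsk]; push_cast; ring
      rw [hsc, Nat.factorial_succ]
      have hne : ((k : ℂ) + 1) ≠ 0 := by exact_mod_cast Nat.succ_ne_zero k
      have hfe : ((k.factorial : ℂ)) ≠ 0 := by exact_mod_cast k.factorial_ne_zero
      push_cast
      field_simp
      ring
    rw [hcoef, zero_smul]

/-! ### locality machinery -/

/-- symmetric-form locality in modes: the modes of `(z-w)^M (U(z)W(w) - η W(w)U(z))` vanish. -/
def SLoc (U W : ℤ → Module.End ℂ V) (η : ℂ) (M : ℕ) : Prop :=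
  ∀ m n : ℤ, ∑ k ∈ Finset.range (M + 1),
    ((-1 : ℂ) ^ k * (M.choose k : ℂ)) •
      (U (m + M - k) ∘ₗ W (n + k) - η • (W (n + k) ∘ₗ U (m + M - k))) = 0

lemma neg_one_pow_sub {M k : ℕ} (hk : k ≤ M) :
    ((-1 : ℂ)) ^ (M - k) = (-1 : ℂ) ^ M * (-1 : ℂ) ^ k := by
  have heven : ((-1 : ℂ)) ^ (k + k) = 1 := Even.neg_one_pow ⟨k, rfl⟩
  calc ((-1 : ℂ)) ^ (M - k) = (-1 : ℂ) ^ (M - k) * (-1 : ℂ) ^ (k + k) := by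
        rw [heven, mul_one]
    _ = (-1 : ℂ) ^ ((M - k) + (k + k)) := (pow_add (-1 : ℂ) (M - k) (k + k)).symm
    _ = (-1 : ℂ) ^ (M + k) := by congr 1; omega
    _ = (-1 : ℂ) ^ M * (-1 : ℂ) ^ k := by rw [pow_add]

lemma sloc_of_locality {U W : ℤ → Module.End ℂ V} {ε : ℂ} {M : ℕ}
    (hloc : ∀ m n : ℤ, ∑ k ∈ Finset.range (M + 1),
      ((-1 : ℂ) ^ k * (M.choose k : ℂ)) •
        (U (m + M - k) ∘ₗ W (n + k) - ε • (W (n + M - k) ∘ₗ U (m + k))) = 0) :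
    SLoc U W (ε * (-1 : ℂ) ^ M) M := by
  intro m n
  have key : ∑ k ∈ Finset.range (M + 1),
      ((-1 : ℂ) ^ k * (M.choose k : ℂ)) • ((ε * (-1 : ℂ) ^ M) • (W (n + k) ∘ₗ U (m + M - k)))
      = ∑ k ∈ Finset.range (M + 1),
      ((-1 : ℂ) ^ k * (M.choose k : ℂ)) • (ε • (W (n + M - k) ∘ₗ U (m + k))) := by
    rw [← Finset.sum_range_reflect fun k =>
      ((-1 : ℂ) ^ k * (M.choose k : ℂ)) • (ε • (W (n + M - k) ∘ₗ U (m + k)))]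
    apply Finset.sum_congr rfl
    intro k hk
    have hkM : k ≤ M := by
      have := Finset.mem_range.mp hk; omega
    have e1 : M + 1 - 1 - k = M - k := by omega
    rw [e1, smul_smul, smul_smul, Nat.choose_symm hkM]
    have e2 : (n + ((M : ℕ) : ℤ) - ((M - k : ℕ) : ℤ)) = n + k := by
      rw [Nat.cast_sub hkM]; ring
    have e3 : (m + ((M - k : ℕ) : ℤ)) = m + ((M : ℕ) : ℤ) - k := by
      rw [Nat.cast_sub hkM]; ring
    rw [e2, e3]
    congr 1
    rw [neg_one_pow_sub hkM]
    ring
  have h := hloc m n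
  calc ∑ k ∈ Finset.range (M + 1),
      ((-1 : ℂ) ^ k * (M.choose k : ℂ)) •
        (U (m + M - k) ∘ₗ W (n + k) - (ε * (-1 : ℂ) ^ M) • (W (n + k) ∘ₗ U (m + M - k)))
      = ∑ k ∈ Finset.range (M + 1),
      (((-1 : ℂ) ^ k * (M.choose k : ℂ)) • (U (m + M - k) ∘ₗ W (n + k))
        - ((-1 : ℂ) ^ k * (M.choose k : ℂ)) • ((ε * (-1 : ℂ) ^ M) • (W (n + k) ∘ₗ U (m + M - k)))) := by
        apply Finset.sum_congr rfl; intro k _; rw [smul_sub]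
    _ = ∑ k ∈ Finset.range (M + 1),
      (((-1 : ℂ) ^ k * (M.choose k : ℂ)) • (U (m + M - k) ∘ₗ W (n + k))
        - ((-1 : ℂ) ^ k * (M.choose k : ℂ)) • (ε • (W (n + M - k) ∘ₗ U (m + k)))) := by
        rw [Finset.sum_sub_distrib, Finset.sum_sub_distrib, key]
    _ = ∑ k ∈ Finset.range (M + 1),
      ((-1 : ℂ) ^ k * (M.choose k : ℂ)) •
        (U (m + M - k) ∘ₗ W (n + k) - ε • (W (n + M - k) ∘ₗ U (m + k))) := by
        apply Finset.sum_congr rfl; intro k _; rw [smul_sub]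
    _ = 0 := h

lemma sloc_succ {U W : ℤ → Module.End ℂ V} {η : ℂ} {M : ℕ}
    (h : SLoc U W η M) : SLoc U W η (M + 1) := by
  have P : ℤ → ℤ → Module.End ℂ V := fun p q => U p ∘ₗ W q - η • (W q ∘ₗ U p)
  intro m n
  have hterm : ∀ k ∈ Finset.range (M + 2),
      ((-1 : ℂ) ^ k * ((M + 1).choose k : ℂ)) •
        (U (m + (M + 1 : ℕ) - k) ∘ₗ W (n + k) - η • (W (n + k) ∘ₗ U (m + (M + 1 : ℕ) - k)))
      = ((-1 : ℂ) ^ k * (M.choose k : ℂ)) •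
        (U ((m + 1) + (M : ℕ) - k) ∘ₗ W (n + k) - η • (W (n + k) ∘ₗ U ((m + 1) + (M : ℕ) - k)))
        + ((-1 : ℂ) ^ k * ((if k = 0 then 0 else M.choose (k - 1)) : ℂ)) •
        (U (m + (M + 1 : ℕ) - k) ∘ₗ W (n + k) - η • (W (n + k) ∘ₗ U (m + (M + 1 : ℕ) - k))) := by
    intro k _
    have e1 : (m + ((M + 1 : ℕ) : ℤ) - (k : ℤ)) = (m + 1) + ((M : ℕ) : ℤ) - k := by
      push_cast; ring
    rw [e1, ← add_smul]
    congr 1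
    rcases k with _ | j
    · norm_num
    · rw [Nat.choose_succ_succ]
      push_cast [Nat.succ_ne_zero]
      ring
  rw [Finset.sum_congr rfl hterm, Finset.sum_add_distrib]
  have hA : ∑ k ∈ Finset.range (M + 2),
      ((-1 : ℂ) ^ k * (M.choose k : ℂ)) •
        (U ((m + 1) + (M : ℕ) - k) ∘ₗ W (n + k) - η • (W (n + k) ∘ₗ U ((m + 1) + (M : ℕ) - k))) = 0 := by
    rw [Finset.sum_range_succ, Nat.choose_succ_self]
    simpa using h (m + 1) n
  have hB : ∑ k ∈ Finset.range (M + 2),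
      ((-1 : ℂ) ^ k * ((if k = 0 then 0 else M.choose (k - 1)) : ℂ)) •
        (U (m + (M + 1 : ℕ) - k) ∘ₗ W (n + k) - η • (W (n + k) ∘ₗ U (m + (M + 1 : ℕ) - k))) = 0 := by
    rw [Finset.sum_range_succ']
    have h0 : ((-1 : ℂ) ^ (0:ℕ) * ((if (0:ℕ) = 0 then 0 else M.choose (0 - 1)) : ℂ)) •
        (U (m + (M + 1 : ℕ) - (0:ℕ)) ∘ₗ W (n + (0:ℕ)) - η • (W (n + (0:ℕ)) ∘ₗ U (m + (M + 1 : ℕ) - (0:ℕ)))) = 0 := by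
      norm_num
    rw [h0, add_zero]
    have hcg : ∀ i ∈ Finset.range (M + 1),
        ((-1 : ℂ) ^ (i + 1) * ((if i + 1 = 0 then 0 else M.choose (i + 1 - 1)) : ℂ)) •
          (U (m + (M + 1 : ℕ) - ((i + 1 : ℕ) : ℤ)) ∘ₗ W (n + ((i + 1 : ℕ) : ℤ))
            - η • (W (n + ((i + 1 : ℕ) : ℤ)) ∘ₗ U (m + (M + 1 : ℕ) - ((i + 1 : ℕ) : ℤ))))
        = -(((-1 : ℂ) ^ i * (M.choose i : ℂ)) •
          (U (m + (M : ℕ) - i) ∘ₗ W ((n + 1) + i) - η • (W ((n + 1) + i) ∘ₗ U (m + (M : ℕ) - i)))) := by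
      intro i _
      rw [if_neg i.succ_ne_zero, Nat.add_sub_cancel, ← neg_smul]
      have e1 : (m + ((M + 1 : ℕ) : ℤ) - ((i + 1 : ℕ) : ℤ)) = m + ((M : ℕ) : ℤ) - i := by
        push_cast; ring
      have e2 : (n + ((i + 1 : ℕ) : ℤ)) = (n + 1) + (i : ℤ) := by
        push_cast; ring
      rw [e1, e2]
      congr 1
      ring
    rw [Finset.sum_congr rfl hcg, Finset.sum_neg_distrib]
    simpa using h m (n + 1)
  rw [hA, hB, add_zero]

lemma sloc_of_le {U W : ℤ → Module.End ℂ V} {η : ℂ} {M N : ℕ}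
    (h : SLoc U W η M) (hMN : M ≤ N) : SLoc U W η N := by
  induction N, hMN using Nat.le_induction with
  | base => exact h
  | succ N _ ih => exact sloc_succ ih

lemma sloc_smul {U W : ℤ → Module.End ℂ V} {η : ℂ} {M : ℕ}
    (h : SLoc U W η M) (c : ℂ) : SLoc (fun r => c • U r) W η M := by
  intro m n
  have hterm : ∀ k ∈ Finset.range (M + 1),
      ((-1:ℂ)^k * (M.choose k : ℂ)) •
        ((fun r => c • U r) (m + (M:ℕ) - k) ∘ₗ W (n + k)
          - η • (W (n + k) ∘ₗ (fun r => c • U r) (m + (M:ℕ) - k)))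
      = c • (((-1:ℂ)^k * (M.choose k : ℂ)) •
        (U (m + (M:ℕ) - k) ∘ₗ W (n + k) - η • (W (n + k) ∘ₗ U (m + (M:ℕ) - k)))) := by
    intro k _
    simp only []
    rw [LinearMap.smul_comp, LinearMap.comp_smul, smul_comm η c, ← smul_sub, smul_comm]
  rw [Finset.sum_congr rfl hterm, ← Finset.smul_sum, h m n, smul_zero]

lemma sloc_deriv {U W : ℤ → Module.End ℂ V} {η : ℂ} {M : ℕ} (h : SLoc U W η M) :
    SLoc (fun r => ((r : ℤ) : ℂ) • U (r - 1)) W η (M + 1) := by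
  have hsucc := sloc_succ h
  intro m n
  have hstep : ∀ k ∈ Finset.range (M + 2),
      ((-1:ℂ)^k * (((M+1).choose k) : ℂ)) •
        ((fun r => ((r : ℤ) : ℂ) • U (r - 1)) (m + ((M+1:ℕ):ℤ) - k) ∘ₗ W (n + k)
          - η • (W (n + k) ∘ₗ (fun r => ((r : ℤ) : ℂ) • U (r - 1)) (m + ((M+1:ℕ):ℤ) - k)))
      = (m:ℂ) • (((-1:ℂ)^k * (((M+1).choose k) : ℂ)) •
          (U ((m - 1) + ((M+1:ℕ):ℤ) - k) ∘ₗ W (n + k)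
            - η • (W (n + k) ∘ₗ U ((m - 1) + ((M+1:ℕ):ℤ) - k))))
        + (((M+1:ℕ)):ℂ) • (((-1:ℂ)^k * ((M.choose k) : ℂ)) •
          (U (m + ((M:ℕ):ℤ) - k) ∘ₗ W (n + k) - η • (W (n + k) ∘ₗ U (m + ((M:ℕ):ℤ) - k)))) := by
    intro k hk
    have hkM : k ≤ M + 1 := by have := Finset.mem_range.mp hk; omega
    have e1 : (m - 1) + ((M+1:ℕ):ℤ) - (k:ℤ) = (m + ((M+1:ℕ):ℤ) - k) - 1 := by ring
    have e2 : m + ((M:ℕ):ℤ) - (k:ℤ) = (m + ((M+1:ℕ):ℤ) - k) - 1 := by push_cast; ring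
    rw [e1, e2]
    simp only []
    rw [LinearMap.smul_comp, LinearMap.comp_smul, smul_comm η, ← smul_sub,
      smul_smul, smul_smul, smul_smul, ← add_smul]
    congr 1
    have hcast : (((m + ((M+1:ℕ):ℤ) - (k:ℤ)) : ℤ) : ℂ) = (m:ℂ) + (((M+1-k : ℕ)):ℂ) := by
      push_cast [Nat.cast_sub hkM]
      ring
    have hnat : ((M+1).choose k) * (M + 1 - k) = (M+1) * (M.choose k) := by
      rw [← Nat.choose_succ_right_eq, ← Nat.add_one_mul_choose_eq]
    have hnatC : (((M+1).choose k : ℕ) : ℂ) * ((M + 1 - k : ℕ) : ℂ)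
        = ((M+1 : ℕ) : ℂ) * ((M.choose k : ℕ) : ℂ) := by exact_mod_cast hnat
    rw [hcast]
    linear_combination ((-1:ℂ)^k) * hnatC
  rw [Finset.sum_congr rfl hstep, Finset.sum_add_distrib, ← Finset.smul_sum, ← Finset.smul_sum,
    hsucc (m-1) n, smul_zero, zero_add]
  have hlast : ∑ k ∈ Finset.range (M + 2),
      ((-1:ℂ)^k * ((M.choose k) : ℂ)) •
        (U (m + ((M:ℕ):ℤ) - k) ∘ₗ W (n + k) - η • (W (n + k) ∘ₗ U (m + ((M:ℕ):ℤ) - k))) = 0 := by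
    rw [Finset.sum_range_succ, Nat.choose_succ_self]
    simpa using h m n
  rw [hlast, smul_zero]

lemma sloc_extract {X : ℤ → Module.End ℂ V} {b : V} {η : ℂ} {N : ℕ}
    (h : SLoc X (𝒱.Y b) η N) (m : ℤ) :
    X (m + N) b = η • ∑ k ∈ Finset.range (N + 1),
      ((-1:ℂ)^k * (N.choose k : ℂ)) • (𝒱.Y b (-1 + k) (X (m + (N:ℕ) - k) 𝒱.vacuum)) := by
  have h0 := congrArg (fun L : Module.End ℂ V => L 𝒱.vacuum) (h m (-1))
  simp only [LinearMap.sum_apply, LinearMap.smul_apply, LinearMap.sub_apply,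
    LinearMap.comp_apply, LinearMap.zero_apply] at h0
  have hterm : ∀ k ∈ Finset.range (N + 1),
      ((-1:ℂ)^k * (N.choose k : ℂ)) •
        (X (m + (N:ℕ) - k) ((𝒱.Y b (-1 + k)) 𝒱.vacuum)
          - η • ((𝒱.Y b (-1 + k)) (X (m + (N:ℕ) - k) 𝒱.vacuum)))
      = ((-1:ℂ)^k * (N.choose k : ℂ)) • (X (m + (N:ℕ) - k) ((𝒱.Y b (-1 + k)) 𝒱.vacuum))
        - η • (((-1:ℂ)^k * (N.choose k : ℂ)) • ((𝒱.Y b (-1 + k)) (X (m + (N:ℕ) - k) 𝒱.vacuum))) := by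
    intro k _
    rw [smul_sub, smul_comm]
  rw [Finset.sum_congr rfl hterm, Finset.sum_sub_distrib, ← Finset.smul_sum] at h0
  have hfirst : ∑ k ∈ Finset.range (N + 1),
      ((-1:ℂ)^k * (N.choose k : ℂ)) • (X (m + (N:ℕ) - k) ((𝒱.Y b (-1 + k)) 𝒱.vacuum))
      = X (m + (N:ℕ)) b := by
    rw [Finset.sum_eq_single 0]
    · simp [𝒱.creation_eq b]
    · intro k _ hk0
      have : (0:ℤ) ≤ -1 + k := by omega
      rw [𝒱.creation_zero b (-1 + k) this, map_zero, smul_zero]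
    · intro habs
      exact absurd (Finset.mem_range.mpr (Nat.succ_pos N)) habs
  rw [hfirst] at h0
  exact (sub_eq_zero.mp h0)

lemma sign_sq (c : Bool) (M : ℕ) :
    (((if c then (-1:ℂ) else 1) * (-1:ℂ)^M) * ((if c then (-1:ℂ) else 1) * (-1:ℂ)^M)) = 1 := by
  have h1 : ((-1:ℂ))^M * (-1:ℂ)^M = 1 := by
    rw [← pow_add]; exact Even.neg_one_pow ⟨M, rfl⟩
  cases c
  · simpa using h1
  · simp only [if_true]
    linear_combination h1

lemma exists_shift_hom {a b : V} {pa pb : Bool}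
    (ha : a ∈ (if pa then 𝒱.odd else 𝒱.even)) (hb : b ∈ (if pb then 𝒱.odd else 𝒱.even)) :
    ∃ c : V, ∀ r : ℤ, 𝒱.Y c r b = ((-r : ℤ) : ℂ) • 𝒱.Y a (r - 1) b := by
  classical
  have hTa : 𝒱.T a ∈ 𝒱.even ⊔ 𝒱.odd := by rw [𝒱.grading_sup]; exact Submodule.mem_top
  obtain ⟨u, hu, v, hv, huv⟩ := Submodule.mem_sup.mp hTa
  set t : V := if pa then v else u with hts
  set w : V := if pa then u else v with hws
  have ht : t ∈ (if pa then 𝒱.odd else 𝒱.even) := by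
    cases pa
    · simpa [hts] using hu
    · simpa [hts] using hv
  have hw : w ∈ (if (!pa) then 𝒱.odd else 𝒱.even) := by
    cases pa
    · simpa [hws] using hv
    · simpa [hws] using hu
  have htw : 𝒱.T a = t + w := by
    cases pa
    · simp only [hts, hws, if_neg Bool.false_ne_true]
      exact huv.symm
    · simp only [hts, hws, if_pos rfl]
      rw [add_comm]
      exact huv.symm
  obtain ⟨M₁, hM₁⟩ := 𝒱.locality t b pa pb ht hb
  obtain ⟨M₂, hM₂⟩ := 𝒱.locality w b (!pa) pb hw hb
  obtain ⟨M₃, hM₃⟩ := 𝒱.locality a b pa pb ha hb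
  set η₁ : ℂ := (if pa && pb then (-1:ℂ) else 1) * (-1:ℂ)^M₁ with hη₁
  set η₂ : ℂ := (if (!pa) && pb then (-1:ℂ) else 1) * (-1:ℂ)^M₂ with hη₂
  set η₃ : ℂ := (if pa && pb then (-1:ℂ) else 1) * (-1:ℂ)^M₃ with hη₃
  have hs₁ : η₁ * η₁ = 1 := sign_sq _ _
  have hs₂ : η₂ * η₂ = 1 := sign_sq _ _
  have hs₃ : η₃ * η₃ = 1 := sign_sq _ _
  set N : ℕ := max (max M₁ M₂) (M₃ + 1) with hN
  have s₁ : SLoc (𝒱.Y t) (𝒱.Y b) η₁ N :=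
    sloc_of_le (sloc_of_locality hM₁) (by omega)
  have s₂ : SLoc (𝒱.Y w) (𝒱.Y b) η₂ N :=
    sloc_of_le (sloc_of_locality hM₂) (by omega)
  have s₃ : SLoc (fun r => ((r : ℤ) : ℂ) • 𝒱.Y a (r - 1)) (𝒱.Y b) η₃ N :=
    sloc_of_le (sloc_deriv (sloc_of_locality hM₃)) (by omega)
  refine ⟨(η₃ * η₁) • t + (η₃ * η₂) • w, fun r => ?_⟩
  have e₁ := 𝒱.sloc_extract s₁ (r - N)
  have e₂ := 𝒱.sloc_extract s₂ (r - N)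
  have e₃ := 𝒱.sloc_extract s₃ (r - N)
  have er : r - (N:ℤ) + (N:ℕ) = r := by ring
  rw [er] at e₁ e₂ e₃
  simp only [LinearMap.smul_apply] at e₃
  have hsum : η₁ • (𝒱.Y t r b) + η₂ • (𝒱.Y w r b)
      + η₃ • (((r : ℤ) : ℂ) • 𝒱.Y a (r - 1) b) = 0 := by
    rw [e₁, e₂, e₃, smul_smul, smul_smul, smul_smul, hs₁, hs₂, hs₃, one_smul, one_smul, one_smul]
    rw [← Finset.sum_add_distrib, ← Finset.sum_add_distrib]
    apply Finset.sum_eq_zero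
    intro k _
    rw [← smul_add, ← smul_add, ← map_add, ← map_add]
    set sk : ℤ := r - (k:ℤ) with hsk
    have hvac : 𝒱.Y t sk 𝒱.vacuum + 𝒱.Y w sk 𝒱.vacuum
        + ((sk : ℤ) : ℂ) • 𝒱.Y a (sk - 1) 𝒱.vacuum = 0 := by
      have h1 : 𝒱.Y t sk 𝒱.vacuum + 𝒱.Y w sk 𝒱.vacuum = 𝒱.Y (𝒱.T a) sk 𝒱.vacuum := by
        rw [htw, map_add]
        rfl
      rw [h1]
      exact 𝒱.D_vac a sk
    rw [hvac, map_zero, smul_zero]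
  have hYc : 𝒱.Y ((η₃ * η₁) • t + (η₃ * η₂) • w) r b
      = (η₃ * η₁) • 𝒱.Y t r b + (η₃ * η₂) • 𝒱.Y w r b := by
    rw [map_add, map_smul, map_smul]
    rfl
  rw [hYc]
  have h2 : η₁ • (𝒱.Y t r b) + η₂ • (𝒱.Y w r b)
      = -(η₃ • (((r : ℤ) : ℂ) • 𝒱.Y a (r - 1) b)) :=
    eq_neg_of_add_eq_zero_left hsum
  have h3 : (η₃ * η₁) • 𝒱.Y t r b + (η₃ * η₂) • 𝒱.Y w r b
      = η₃ • (η₁ • (𝒱.Y t r b) + η₂ • (𝒱.Y w r b)) := by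
    rw [smul_add, smul_smul, smul_smul]
  have h4 : ∀ x : V, η₃ • (η₃ • x) = x := by
    intro x; rw [smul_smul, hs₃, one_smul]
  rw [h3, h2, smul_neg, h4]
  have h5 : ((-r : ℤ) : ℂ) = -((r : ℤ) : ℂ) := by push_cast; ring
  rw [h5, ← neg_smul]

lemma exists_shift (a : V) {b : V} {pb : Bool}
    (hb : b ∈ (if pb then 𝒱.odd else 𝒱.even)) :
    ∃ c : V, ∀ r : ℤ, 𝒱.Y c r b = ((-r : ℤ) : ℂ) • 𝒱.Y a (r - 1) b := by
  have hA : a ∈ 𝒱.even ⊔ 𝒱.odd := by rw [𝒱.grading_sup]; exact Submodule.mem_top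
  obtain ⟨a₀, ha₀, a₁, ha₁, hsum⟩ := Submodule.mem_sup.mp hA
  obtain ⟨c₀, hc₀⟩ := 𝒱.exists_shift_hom (pa := false) (pb := pb) (by simpa using ha₀) hb
  obtain ⟨c₁, hc₁⟩ := 𝒱.exists_shift_hom (pa := true) (pb := pb) (by simpa using ha₁) hb
  refine ⟨c₀ + c₁, fun r => ?_⟩
  have h1 : 𝒱.Y (c₀ + c₁) r b = 𝒱.Y c₀ r b + 𝒱.Y c₁ r b := by rw [map_add]; rfl
  have h2 : 𝒱.Y a (r - 1) b = 𝒱.Y a₀ (r - 1) b + 𝒱.Y a₁ (r - 1) b := by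
    rw [← hsum, map_add]; rfl
  rw [h1, hc₀ r, hc₁ r, h2, smul_add]


/-! ### circP lemmas -/

lemma exists_bound (n : ℕ) (a b : V) :
    ∃ K : ℕ, ∀ j : ℕ, K ≤ j → 𝒱.Y a ((j : ℤ) - (n : ℤ)) b = 0 := by
  obtain ⟨N, hN⟩ := 𝒱.field_cond a b
  refine ⟨(N + n + 1).toNat, fun j hj => ?_⟩
  apply hN
  have h1 : (N + (n : ℤ) + 1) ≤ ((N + n + 1).toNat : ℤ) := Int.self_le_toNat _
  have h2 : (((N + (n : ℤ) + 1).toNat : ℕ) : ℤ) ≤ (j : ℤ) := by exact_mod_cast hj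
  omega

lemma circP_eq_sum (n : ℕ) (a b : V) {K : ℕ}
    (hK : ∀ j : ℕ, K ≤ j → 𝒱.Y a ((j : ℤ) - (n : ℤ)) b = 0) :
    𝒱.circP n a b = ∑ j ∈ Finset.range K,
      PolynomialModule.single ℂ j (zhuKernelCoeff n j • 𝒱.Y a ((j : ℤ) - (n : ℤ)) b) := by
  apply finsum_eq_sum_of_support_subset
  intro j hj
  by_contra hjK
  have hKj : K ≤ j := by
    simp only [Finset.coe_range, Set.mem_Iio, not_lt] at hjK
    exact hjK
  apply hj
  show PolynomialModule.single ℂ j (zhuKernelCoeff n j • 𝒱.Y a ((j : ℤ) - (n : ℤ)) b) = 0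
  rw [hK j hKj, smul_zero, PolynomialModule.single_zero]

lemma circP_add_right (n : ℕ) (a b b' : V) :
    𝒱.circP n a (b + b') = 𝒱.circP n a b + 𝒱.circP n a b' := by
  obtain ⟨K₁, h₁⟩ := 𝒱.exists_bound n a b
  obtain ⟨K₂, h₂⟩ := 𝒱.exists_bound n a b'
  have h₃ : ∀ j : ℕ, max K₁ K₂ ≤ j → 𝒱.Y a ((j : ℤ) - (n : ℤ)) (b + b') = 0 := by
    intro j hj
    rw [map_add, h₁ j (le_trans (le_max_left _ _) hj), h₂ j (le_trans (le_max_right _ _) hj),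
      add_zero]
  rw [𝒱.circP_eq_sum n a b (K := max K₁ K₂) (fun j hj => h₁ j (le_trans (le_max_left _ _) hj)),
    𝒱.circP_eq_sum n a b' (K := max K₁ K₂) (fun j hj => h₂ j (le_trans (le_max_right _ _) hj)),
    𝒱.circP_eq_sum n a (b + b') (K := max K₁ K₂) h₃, ← Finset.sum_add_distrib]
  apply Finset.sum_congr rfl
  intro j _
  rw [map_add, smul_add, PolynomialModule.single_add]

lemma circP_key (n : ℕ) (hn : 1 ≤ n) (a : V) {b : V} {pb : Bool}
    (hb : b ∈ (if pb then 𝒱.odd else 𝒱.even)) :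
    ∃ c : V, (Polynomial.C ((n : ℕ) : ℂ)) • 𝒱.circP (n+1) a b
      = 𝒱.circP n c b + (Polynomial.monomial 1 ((1:ℂ) - ((n : ℕ) : ℂ))) • 𝒱.circP n a b := by
  obtain ⟨c, hc⟩ := 𝒱.exists_shift a hb
  obtain ⟨K₁, h₁⟩ := 𝒱.exists_bound (n+1) a b
  obtain ⟨K₂, h₂⟩ := 𝒱.exists_bound n a b
  obtain ⟨K₃, h₃⟩ := 𝒱.exists_bound n c b
  set K₀ : ℕ := max (max K₁ K₂) K₃ with hK₀
  have hK₁ : K₁ ≤ K₀ := le_trans (le_max_left _ _) (le_max_left _ _)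
  have hK₂ : K₂ ≤ K₀ := le_trans (le_max_right _ _) (le_max_left _ _)
  have hK₃ : K₃ ≤ K₀ := le_max_right _ _
  have r₁ := 𝒱.circP_eq_sum (n+1) a b (K := K₀ + 1)
    (fun j hj => h₁ j (by omega))
  have r₂ := 𝒱.circP_eq_sum n a b (K := K₀ + 1)
    (fun j hj => h₂ j (by omega))
  have r₃ := 𝒱.circP_eq_sum n c b (K := K₀ + 1)
    (fun j hj => h₃ j (by omega))
  refine ⟨c, ?_⟩
  have hLHS : (Polynomial.C ((n : ℕ) : ℂ)) • 𝒱.circP (n+1) a b - 𝒱.circP n c b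
      = ∑ j ∈ Finset.range (K₀ + 1), PolynomialModule.single ℂ j
          (((((n : ℕ) : ℂ)) * zhuKernelCoeff (n+1) j
              - zhuKernelCoeff n j * (((n : ℕ) : ℂ) - (j : ℂ)))
            • 𝒱.Y a ((j : ℤ) - ((n+1 : ℕ) : ℤ)) b) := by
    rw [r₁, r₃, Finset.smul_sum, ← Finset.sum_sub_distrib]
    apply Finset.sum_congr rfl
    intro j _
    rw [← Polynomial.monomial_zero_left, PolynomialModule.monomial_smul_single, zero_add]
    rw [hc ((j : ℤ) - (n : ℤ))]
    rw [show ∀ x y : V, PolynomialModule.single ℂ j x - PolynomialModule.single ℂ j y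
        = PolynomialModule.single ℂ j (x - y) from fun x y => by
        rw [sub_eq_iff_eq_add, ← PolynomialModule.single_add, sub_add_cancel]]
    congr 1
    have hidx : (j : ℤ) - (n : ℤ) - 1 = (j : ℤ) - ((n+1 : ℕ) : ℤ) := by push_cast; ring
    rw [hidx, smul_smul, smul_smul, ← sub_smul]
    congr 1
    push_cast
    ring
  have hRHS : (Polynomial.monomial 1 ((1:ℂ) - ((n : ℕ) : ℂ))) • 𝒱.circP n a b
      = ∑ j ∈ Finset.range (K₀ + 1), PolynomialModule.single ℂ (j+1)
          ((((1:ℂ) - ((n : ℕ) : ℂ)) * zhuKernelCoeff n j) • 𝒱.Y a ((j : ℤ) - (n : ℤ)) b) := by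
    rw [r₂, Finset.smul_sum]
    apply Finset.sum_congr rfl
    intro j _
    rw [PolynomialModule.monomial_smul_single, smul_smul, Nat.add_comm 1 j]
  have hfinal : ∑ j ∈ Finset.range (K₀ + 1), PolynomialModule.single ℂ j
          (((((n : ℕ) : ℂ)) * zhuKernelCoeff (n+1) j
              - zhuKernelCoeff n j * (((n : ℕ) : ℂ) - (j : ℂ)))
            • 𝒱.Y a ((j : ℤ) - ((n+1 : ℕ) : ℤ)) b)
      = ∑ j ∈ Finset.range (K₀ + 1), PolynomialModule.single ℂ (j+1)
          ((((1:ℂ) - ((n : ℕ) : ℂ)) * zhuKernelCoeff n j) • 𝒱.Y a ((j : ℤ) - (n : ℤ)) b) := by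
    rw [Finset.sum_range_succ', Finset.sum_range_succ]
    have h0 : PolynomialModule.single ℂ 0
        (((((n : ℕ) : ℂ)) * zhuKernelCoeff (n+1) 0
            - zhuKernelCoeff n 0 * (((n : ℕ) : ℂ) - ((0 : ℕ) : ℂ)))
          • 𝒱.Y a (((0 : ℕ) : ℤ) - ((n+1 : ℕ) : ℤ)) b) = 0 := by
      have hz : (((n : ℕ) : ℂ)) * zhuKernelCoeff (n+1) 0
          - zhuKernelCoeff n 0 * (((n : ℕ) : ℂ) - ((0 : ℕ) : ℂ)) = 0 := by
        have := ZhuAux.key_coeff_zero n hn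
        push_cast
        linear_combination this
      rw [hz, zero_smul, PolynomialModule.single_zero]
    have hlast : PolynomialModule.single ℂ (K₀ + 1)
        ((((1:ℂ) - ((n : ℕ) : ℂ)) * zhuKernelCoeff n K₀) • 𝒱.Y a ((K₀ : ℤ) - (n : ℤ)) b) = 0 := by
      rw [h₂ K₀ hK₂, smul_zero, PolynomialModule.single_zero]
    rw [h0, hlast, add_zero, add_zero]
    apply Finset.sum_congr rfl
    intro i _
    congr 1
    have hidx : ((i + 1 : ℕ) : ℤ) - ((n+1 : ℕ) : ℤ) = (i : ℤ) - (n : ℤ) := by push_cast; ring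
    rw [hidx]
    congr 1
    have hk := ZhuAux.key_coeff_succ n i hn
    push_cast at hk ⊢
    linear_combination hk
  exact sub_eq_iff_eq_add'.mp (hLHS.trans (hfinal.trans hRHS.symm))

lemma circP_succ_mem (n : ℕ) (hn : 1 ≤ n)
    (IH : ∀ x y : V, 𝒱.circP n x y ∈ 𝒱.OtildeP) (a b : V) :
    𝒱.circP (n+1) a b ∈ 𝒱.OtildeP := by
  have hbtop : b ∈ 𝒱.even ⊔ 𝒱.odd := by rw [𝒱.grading_sup]; exact Submodule.mem_top
  obtain ⟨b₀, hb₀, b₁, hb₁, hbsum⟩ := Submodule.mem_sup.mp hbtop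
  have key : ∀ (b' : V) (pb : Bool), b' ∈ (if pb then 𝒱.odd else 𝒱.even) →
      𝒱.circP (n+1) a b' ∈ 𝒱.OtildeP := by
    intro b' pb hb'
    obtain ⟨c, hc⟩ := 𝒱.circP_key n hn a hb'
    have hmem : (Polynomial.C ((n : ℕ) : ℂ)) • 𝒱.circP (n+1) a b' ∈ 𝒱.OtildeP := by
      rw [hc]
      exact Submodule.add_mem _ (IH c b') (Submodule.smul_mem _ _ (IH a b'))
    have hne : ((n : ℕ) : ℂ) ≠ 0 := Nat.cast_ne_zero.mpr (by omega)
    have h2 := Submodule.smul_mem 𝒱.OtildeP (Polynomial.C (((n : ℕ) : ℂ))⁻¹) hmem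
    rwa [smul_smul, ← Polynomial.C_mul, inv_mul_cancel₀ hne, Polynomial.C_1, one_smul] at h2
  rw [← hbsum, 𝒱.circP_add_right]
  exact Submodule.add_mem _ (key b₀ false (by simpa using hb₀)) (key b₁ true (by simpa using hb₁))

lemma circP_mem_of_two_le : ∀ (n : ℕ), 2 ≤ n → ∀ a b : V, 𝒱.circP n a b ∈ 𝒱.OtildeP := by
  intro n hn
  induction n, hn using Nat.le_induction with
  | base =>
      intro a b
      exact Submodule.subset_span ⟨a, b, rfl⟩
  | succ n hn ih =>
      intro a b
      exact 𝒱.circP_succ_mem n (by omega) ih a b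

end VertexSuperalgebra


/-- For `γ` a formal variable,
`Õ_γ(V) := Span_{ℂ[γ]}{a ∘_{γ,2} b}` contains all `a ∘_{γ,n} b` for `n ≥ 2`, and
`Õ_γ(V) = ∑_{n ≥ 2} Span_{ℂ[γ]}{a ∘_{γ,n} b}`. -/
theorem OtildeP_contains_higher
    {V : Type} [AddCommGroup V] [Module ℂ V] (𝒱 : VertexSuperalgebra V) :
    (∀ (n : ℕ) (a b : V), 2 ≤ n → 𝒱.circP n a b ∈ 𝒱.OtildeP) ∧
      𝒱.OtildeP = Submodule.span (Polynomial ℂ)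
        {x | ∃ (n : ℕ) (a b : V), 2 ≤ n ∧ x = 𝒱.circP n a b} := by
  constructor
  · intro n a b hn
    exact 𝒱.circP_mem_of_two_le n hn a b
  · apply le_antisymm
    · apply Submodule.span_mono
      rintro x ⟨a, b, hx⟩
      exact ⟨2, a, b, le_refl 2, hx⟩
    · rw [Submodule.span_le]
      rintro x ⟨n, a, b, hn, rfl⟩
      exact 𝒱.circP_mem_of_two_le n hn a b

end
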